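/- Divergence of the bias in the counterexample construction: let (εᵈ)ᵈ be a sequence of positive reals and (βᵈ)ᵈ a real sequence with |βᵈ|/εᵈ → ∞. Set θᵈ = π/2 − εᵈ and μᵈ = exp(εᵈ⁻¹). Then the quantity |δᵈ| = (|cos θᵈ sin θᵈ|·μᵈ)/(μᵈ cos²θᵈ + 1) · |βᵈ sin θᵈ − β_{d+1} cos θᵈ| tends to infinity along odd d, provided βᵈ is eventually bounded away from contributing cancellation, e.g., |βᵈ sin θᵈ − β_{d+1}cos θᵈ| ≥ |βᵈ|/2 eventually. More precisely, as d → ∞, (|cos θᵈ sin θᵈ|μᵈ)/(μᵈ cos²θᵈ + 1) ∼ 1/(εᵈ(1 + exp(−εᵈ⁻¹))), so |δᵈ| ≳ |βᵈ|/(2εᵈ) → ∞. -/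

import Mathlib

open Filter Real

/-! As `ε → 0`, `cos θ ∼ ε` and `sin θ → 1`, while `μ cos² θ ∼ exp(ε⁻¹) ε² → ∞`; so the
factor `|cos θ sin θ| μ / (μ cos² θ + 1)` in front of the cancellation term is of order
`ε⁻¹`. Concretely it is at least `(12 ε)⁻¹` once `ε ≤ 1`, and the cancellation bound turns
this into `|δ| ≥ |β| / (24 ε) → ∞`. -/

lemma one_le_two_mul_exp_inv_mul_sq {e : ℝ} (he : 0 < e) : 1 ≤ 2 * (exp e⁻¹ * e ^ 2) := by
  calc 1 = 2 * (e⁻¹ ^ 2 / 2 * e ^ 2) := by field_simp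
    _ ≤ 2 * (exp e⁻¹ * e ^ 2) := by
      have h := pow_div_factorial_le_exp (x := e⁻¹) (by positivity) 2
      rw [Nat.factorial_two, Nat.cast_two] at h
      gcongr

lemma inv_twelve_mul_le_gain_pi_div_two_sub {e μ : ℝ} (he : 0 < e) (he1 : e ≤ 1)
    (hμ : 1 ≤ 2 * (μ * e ^ 2)) :
    (12 * e)⁻¹ ≤ |cos (π / 2 - e) * sin (π / 2 - e)| * μ / (μ * cos (π / 2 - e) ^ 2 + 1) := by
  rw [cos_pi_div_two_sub, sin_pi_div_two_sub]
  have hμpos : 0 < μ := by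
    by_contra! h
    nlinarith [mul_nonpos_of_nonpos_of_nonneg h (sq_nonneg e)]
  have hsin_lower : e / 2 ≤ sin e := by
    have h := mul_le_sin he.le (by linarith [pi_gt_three])
    have : 1 / 2 ≤ 2 / π := by rw [div_le_div_iff₀ (by norm_num) pi_pos]; linarith [pi_le_four]
    nlinarith
  have hsin_upper : sin e ≤ e := sin_le he.le
  have hcos_lower : 1 / 2 ≤ cos e := by nlinarith [one_sub_sq_div_two_le_cos (x := e)]
  have hnum : e / 4 * μ ≤ |sin e * cos e| * μ := by
    rw [abs_of_pos (by nlinarith)]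
    gcongr
    nlinarith
  have hden : μ * sin e ^ 2 + 1 ≤ 3 * (μ * e ^ 2) := by
    have : sin e ^ 2 ≤ e ^ 2 := pow_le_pow_left₀ (by linarith) hsin_upper 2
    nlinarith
  calc (12 * e)⁻¹ = e / 4 * μ / (3 * (μ * e ^ 2)) := by field_simp; ring
    _ ≤ |sin e * cos e| * μ / (μ * sin e ^ 2 + 1) :=
      div_le_div₀ (by positivity) hnum (by positivity) hden

/-- divergence of the bias in the counterexample: with
`θ d = π/2 − ε d`, `μ d = exp(1/ε d)`, `ε d → 0⁺` and `|β d|/ε d → ∞`, if the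
cancellation bound `|β d sin θ d − β (d+1) cos θ d| ≥ |β d|/2` holds
eventually, then the bias magnitude
`|δ d| = (|cos θ d · sin θ d| μ d)/(μ d cos²θ d + 1) · |β d sin θ d − β (d+1) cos θ d|`
tends to infinity. -/
theorem statement12 (ε : ℕ → ℝ) (hεpos : ∀ d, 0 < ε d)
    (hε0 : Tendsto ε atTop (nhds 0))
    (β : ℕ → ℝ)
    (hβε : Tendsto (fun d => |β d| / ε d) atTop atTop)
    (θ : ℕ → ℝ) (hθ : ∀ d, θ d = π/2 - ε d)
    (μ : ℕ → ℝ) (hμ : ∀ d, μ d = Real.exp ((ε d)⁻¹))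
    (hcanc : ∀ᶠ d in atTop, |β d * Real.sin (θ d) - β (d+1) * Real.cos (θ d)| ≥ |β d| / 2)
    (δ : ℕ → ℝ)
    (hδ : ∀ d, δ d = (|Real.cos (θ d) * Real.sin (θ d)| * μ d) /
        (μ d * (Real.cos (θ d))^2 + 1) *
        |β d * Real.sin (θ d) - β (d+1) * Real.cos (θ d)|) :
    Tendsto δ atTop atTop := by
  refine tendsto_atTop_mono' atTop ?_ (hβε.const_mul_atTop (by norm_num : (0 : ℝ) < 1 / 24))
  filter_upwards [hε0.eventually (ge_mem_nhds one_pos), hcanc] with d hε1 hcancd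
  have hgain := inv_twelve_mul_le_gain_pi_div_two_sub (hεpos d) hε1
    (hμ d ▸ one_le_two_mul_exp_inv_mul_sq (hεpos d))
  rw [← hθ] at hgain
  calc 1 / 24 * (|β d| / ε d) = (12 * ε d)⁻¹ * (|β d| / 2) := by field_simp; ring
    _ ≤ δ d := hδ d ▸ mul_le_mul hgain hcancd (by positivity) ((inv_pos.2 (by linarith [hεpos d])).le.trans hgain)
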